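/- Let n ∈ ℕ, T > 0. Let 𝒳 ⊆ ℝⁿ be countable and E ⊆ 𝒳 × 𝒳 a symmetric set of ordered edges with x ≠ y for every (x,y) ∈ E. Let m : [0,T] × 𝒳 → [0,∞), μ : [0,T] × 𝒳 → ℝ, and J : [0,T] × 𝒳 × 𝒳 → ℝ satisfy: (i) Σ_{x∈𝒳} m_t(x) = 1 for every t; (ii) for every x ∈ 𝒳 and t ∈ [0,T], m_t(x) = m_0(x) + ∫₀ᵗ μ_s(x) ds; (iii) J is measurable in t, skew-symmetric (J_t(x,y) = −J_t(y,x)), vanishes off E, and ∫₀ᵀ Σ_{(x,y)∈E} |J_t(x,y)|(1 + ‖y − x‖) dt < ∞; (iv) for every x ∈ 𝒳 and almost every t ∈ (0,T), μ_t(x) + Σ_{y : (x,y)∈E} J_t(x,y) = 0. Then for every smooth compactly supported φ : (0,T) × ℝⁿ → ℝ: ∫₀ᵀ Σ_{x∈𝒳} ∂_t φ(t,x) m_t(x) dt + ∫₀ᵀ ½ Σ_{(x,y)∈E} J_t(x,y) · (1/‖y − x‖) · ( ∫_{[x,y]} ∇φ(t,p) · (y − x) dH¹(p) ) dt = 0.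 -/

import Mathlib

open MeasureTheory
open scoped RealInnerProductSpace ENNReal NNReal

section Aux

lemma seg_measure {n : ℕ} (x y : EuclideanSpace ℝ (Fin n)) :
    (μH[1] : Measure (EuclideanSpace ℝ (Fin n))).restrict (segment ℝ x y)
      = (nndist x y : ℝ≥0∞) •
        Measure.map (AffineMap.lineMap x y : ℝ →ᵃ[ℝ] _) (volume.restrict (Set.Icc 0 1)) := by
  have hc : Continuous (AffineMap.lineMap x y : ℝ →ᵃ[ℝ] _) := AffineMap.lineMap_continuous
  ext S hS
  rw [Measure.restrict_apply hS, Measure.smul_apply,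
      Measure.map_apply hc.measurable hS, Measure.restrict_apply (hc.measurable hS)]
  have h1 : S ∩ segment ℝ x y =
      (AffineMap.lineMap x y : ℝ →ᵃ[ℝ] _) ''
        ((AffineMap.lineMap x y : ℝ →ᵃ[ℝ] _) ⁻¹' S ∩ Set.Icc 0 1) := by
    rw [Set.image_preimage_inter, ← segment_eq_image_lineMap]
  rw [h1, MeasureTheory.hausdorffMeasure_lineMap_image, MeasureTheory.hausdorffMeasure_real]
  simp [ENNReal.smul_def]

lemma seg_integral {n : ℕ} (x y : EuclideanSpace ℝ (Fin n))
    (ψ : EuclideanSpace ℝ (Fin n) → ℝ) (hψ : ContDiff ℝ (⊤ : ℕ∞) ψ) :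
    ∫ p in segment ℝ x y, ⟪gradient ψ p, y - x⟫ ∂(μH[1]) = ‖y - x‖ * (ψ y - ψ x) := by
  have hgrad : ∀ p w, ⟪gradient ψ p, w⟫ = fderiv ℝ ψ p w := by
    intro p w
    have h := (hψ.differentiable (by simp) p).hasGradientAt
    rw [hasGradientAt_iff_hasFDerivAt] at h
    rw [h.fderiv]
    exact (InnerProductSpace.toDual_apply_apply).symm
  have hc : Continuous (AffineMap.lineMap x y : ℝ →ᵃ[ℝ] _) := AffineMap.lineMap_continuous
  have hcont : Continuous fun p => (fderiv ℝ ψ p) (y - x) :=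
    (hψ.continuous_fderiv (by simp)).clm_apply continuous_const
  simp only [hgrad]
  rw [seg_measure, integral_smul_measure,
    integral_map hc.measurable.aemeasurable hcont.aestronglyMeasurable]
  have hF : ∀ s : ℝ, HasDerivAt (fun r : ℝ => ψ (AffineMap.lineMap x y r))
      (fderiv ℝ ψ (AffineMap.lineMap x y s) (y - x)) s := by
    intro s
    have hline : HasDerivAt (fun r : ℝ => (AffineMap.lineMap x y r : EuclideanSpace ℝ (Fin n)))
        (y - x) s := by
      simpa [AffineMap.lineMap_apply_module'] using
        (((hasDerivAt_id s).smul_const (y - x)).add_const x)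
    exact (hψ.differentiable (by simp) (AffineMap.lineMap x y s)).hasFDerivAt.comp_hasDerivAt s hline
  rw [integral_Icc_eq_integral_Ioc, ← intervalIntegral.integral_of_le zero_le_one,
    intervalIntegral.integral_eq_sub_of_hasDerivAt (fun s _ => hF s)
      ((hcont.comp hc).intervalIntegrable 0 1)]
  simp only [AffineMap.lineMap_apply_one, AffineMap.lineMap_apply_zero]
  rw [ENNReal.coe_toReal, coe_nndist, dist_eq_norm', smul_eq_mul]

lemma time_ibp (T : ℝ) (hT : 0 < T) (ψ : ℝ → ℝ) (hψ : ContDiff ℝ (⊤ : ℕ∞) ψ)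
    (hsupp : ∀ t, t ∉ Set.Ioo 0 T → ψ t = 0)
    (g : ℝ → ℝ) (hg : IntervalIntegrable g volume 0 T) (c : ℝ) :
    ∫ t in Set.Ioo 0 T, deriv ψ t * (c + ∫ s in (0:ℝ)..t, g s)
      = - ∫ t in Set.Ioo 0 T, ψ t * g t := by
  have hψ0 : ψ 0 = 0 := hsupp 0 (by simp)
  have hψT : ψ T = 0 := hsupp T (by simp)
  have hdψ : Continuous (deriv ψ) := hψ.continuous_deriv (by simp)
  have hdiff : ∀ t : ℝ, DifferentiableAt ℝ ψ t :=
    fun t => (hψ.differentiable (by simp)).differentiableAt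
  set F : ℝ → ℝ := fun t => ∫ s in (0:ℝ)..t, g s with hFdef
  have huIcc : Set.uIcc (0:ℝ) T = Set.Icc 0 T := Set.uIcc_of_le hT.le
  have hFc : ContinuousOn F (Set.Icc 0 T) := by
    have := intervalIntegral.continuousOn_primitive_interval' hg
      (by rw [huIcc]; exact Set.mem_Icc.2 ⟨le_rfl, hT.le⟩)
    rwa [huIcc] at this
  have hint1 : IntegrableOn (fun t => deriv ψ t * c) (Set.Ioo 0 T) :=
    ((hdψ.mul continuous_const).integrableOn_Icc (a := 0) (b := T)).mono_set
      Set.Ioo_subset_Icc_self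
  have hint2 : IntegrableOn (fun t => deriv ψ t * F t) (Set.Ioo 0 T) :=
    ((hdψ.continuousOn.mul hFc).integrableOn_compact isCompact_Icc).mono_set
      Set.Ioo_subset_Icc_self
  have hsplit : ∫ t in Set.Ioo 0 T, deriv ψ t * (c + F t)
      = (∫ t in Set.Ioo 0 T, deriv ψ t * c) + ∫ t in Set.Ioo 0 T, deriv ψ t * F t := by
    rw [← integral_add hint1 hint2]
    congr 1; funext t; ring
  have hderiv_int : ∫ t in Set.Ioo 0 T, deriv ψ t = 0 := by
    rw [← integral_Ioc_eq_integral_Ioo, ← intervalIntegral.integral_of_le hT.le,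
      intervalIntegral.integral_deriv_eq_sub (fun t _ => hdiff t)
        (hdψ.intervalIntegrable 0 T), hψT, hψ0, sub_zero]
  have hzero : ∫ t in Set.Ioo 0 T, deriv ψ t * c = 0 := by
    rw [integral_mul_const, hderiv_int, zero_mul]
  have hswap : ∫ t in Set.Ioo 0 T, deriv ψ t * F t
      = - ∫ s in Set.Ioo 0 T, ψ s * g s := by
    have hFrep : ∀ t ∈ Set.Ioo (0:ℝ) T,
        deriv ψ t * F t = ∫ s in Set.Ioc (0:ℝ) T,
          deriv ψ t * (Set.Ioc (0:ℝ) t).indicator g s := by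
      intro t ht
      rw [MeasureTheory.integral_const_mul]
      congr 1
      rw [setIntegral_indicator measurableSet_Ioc]
      have : Set.Ioc (0:ℝ) T ∩ Set.Ioc (0:ℝ) t = Set.Ioc 0 t := by
        rw [Set.Ioc_inter_Ioc]
        simp [min_eq_right ht.2.le, max_self]
      rw [this, hFdef]
      show (∫ s in (0:ℝ)..t, g s) = ∫ x in Set.Ioc (0:ℝ) t, g x
      exact intervalIntegral.integral_of_le ht.1.le
    rw [setIntegral_congr_fun measurableSet_Ioo hFrep]
    have hA : MeasurableSet {z : ℝ × ℝ | z.2 ∈ Set.Ioc 0 z.1} := by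
      apply MeasurableSet.inter
      · exact measurableSet_lt measurable_const measurable_snd
      · exact measurableSet_le measurable_snd measurable_fst
    have huncurry : (Function.uncurry fun t s => deriv ψ t * (Set.Ioc (0:ℝ) t).indicator g s)
        = {z : ℝ × ℝ | z.2 ∈ Set.Ioc 0 z.1}.indicator (fun z => deriv ψ z.1 * g z.2) := by
      funext z
      rcases z with ⟨t, s⟩
      simp only [Function.uncurry, Set.indicator_apply, Set.mem_setOf_eq]
      by_cases h : s ∈ Set.Ioc (0:ℝ) t <;> simp [h]
    have hintg : Integrable (Function.uncurry fun t s =>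
        deriv ψ t * (Set.Ioc (0:ℝ) t).indicator g s)
        ((volume.restrict (Set.Ioo 0 T)).prod (volume.restrict (Set.Ioc 0 T))) := by
      rw [huncurry]
      exact (Integrable.mul_prod
        (((hdψ.integrableOn_Icc (a := 0) (b := T)).mono_set Set.Ioo_subset_Icc_self))
        hg.1).indicator hA
    rw [MeasureTheory.integral_integral_swap hintg]
    have hinner : ∀ s ∈ Set.Ioc (0:ℝ) T,
        (∫ t in Set.Ioo 0 T, deriv ψ t * (Set.Ioc (0:ℝ) t).indicator g s)
          = ψ s * g s * (-1) := by
      intro s hs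
      have heq : ∀ t ∈ Set.Ioo (0:ℝ) T,
          deriv ψ t * (Set.Ioc (0:ℝ) t).indicator g s
            = (Set.Ici s).indicator (deriv ψ) t * g s := by
        intro t _
        by_cases h : s ≤ t
        · rw [Set.indicator_of_mem (Set.mem_Ioc.2 ⟨hs.1, h⟩),
            Set.indicator_of_mem (Set.mem_Ici.2 h)]
        · rw [Set.indicator_of_notMem (fun hmem => h (Set.mem_Ioc.1 hmem).2),
            Set.indicator_of_notMem (fun hmem => h (Set.mem_Ici.1 hmem)), mul_zero, zero_mul]
      rw [setIntegral_congr_fun measurableSet_Ioo heq, integral_mul_const,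
        setIntegral_indicator measurableSet_Ici]
      have hset : Set.Ioo (0:ℝ) T ∩ Set.Ici s = Set.Ico s T := by
        ext t
        simp only [Set.mem_inter_iff, Set.mem_Ioo, Set.mem_Ici, Set.mem_Ico]
        constructor
        · rintro ⟨⟨_, h2⟩, h3⟩; exact ⟨h3, h2⟩
        · rintro ⟨h1, h2⟩; exact ⟨⟨lt_of_lt_of_le hs.1 h1, h2⟩, h1⟩
      rw [hset, integral_Ico_eq_integral_Ioo, ← integral_Ioc_eq_integral_Ioo,
        ← intervalIntegral.integral_of_le hs.2,
        intervalIntegral.integral_deriv_eq_sub (fun t _ => hdiff t)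
          (hdψ.intervalIntegrable s T), hψT]
      ring
    rw [setIntegral_congr_fun measurableSet_Ioc hinner]
    have : ∫ s in Set.Ioc (0:ℝ) T, ψ s * g s * (-1) = - ∫ s in Set.Ioc (0:ℝ) T, ψ s * g s := by
      rw [integral_mul_const]; ring
    rw [this, integral_Ioc_eq_integral_Ioo]
  rw [hsplit, hzero, zero_add, hswap]

end Aux

set_option maxHeartbeats 2000000 in
theorem embedded_discrete_flux_solves_continuity_equation
    (n : ℕ) (T : ℝ) (hT : 0 < T)
    (X : Set (EuclideanSpace ℝ (Fin n))) (hX : X.Countable)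
    (E : Set (EuclideanSpace ℝ (Fin n) × EuclideanSpace ℝ (Fin n)))
    (hEX : E ⊆ X ×ˢ X)
    (hEsymm : ∀ x y, (x, y) ∈ E → (y, x) ∈ E)
    (hEne : ∀ x y, (x, y) ∈ E → x ≠ y)
    (m : ℝ → EuclideanSpace ℝ (Fin n) → ℝ)
    (μ : ℝ → EuclideanSpace ℝ (Fin n) → ℝ)
    (J : ℝ → EuclideanSpace ℝ (Fin n) → EuclideanSpace ℝ (Fin n) → ℝ)
    (hm0 : ∀ t ∈ Set.Icc (0 : ℝ) T, ∀ x, 0 ≤ m t x)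
    (hm1 : ∀ t ∈ Set.Icc (0 : ℝ) T, HasSum (fun x : X => m t x) 1)
    (hμint : ∀ x ∈ X, IntervalIntegrable (fun s => μ s x) volume 0 T)
    (hmμ : ∀ x ∈ X, ∀ t ∈ Set.Icc (0 : ℝ) T, m t x = m 0 x + ∫ s in (0 : ℝ)..t, μ s x)
    (hJmeas : ∀ x y, Measurable fun t => J t x y)
    (hJskew : ∀ t x y, J t x y = -J t y x)
    (hJE : ∀ t x y, (x, y) ∉ E → J t x y = 0)
    (hJint : ∫⁻ t in Set.Ioc (0 : ℝ) T,
        ∑' e : E, ENNReal.ofReal (|J t e.1.1 e.1.2| * (1 + ‖e.1.2 - e.1.1‖)) < ⊤)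
    (hCE : ∀ x ∈ X, ∀ᵐ t ∂(volume.restrict (Set.Ioo (0 : ℝ) T)),
        μ t x + ∑' y : {y | (x, y) ∈ E}, J t x (y : EuclideanSpace ℝ (Fin n)) = 0)
    (φ : ℝ × EuclideanSpace ℝ (Fin n) → ℝ)
    (hφ : ContDiff ℝ (⊤ : ℕ∞) φ) (hφc : HasCompactSupport φ)
    (hφsupp : tsupport φ ⊆ Set.Ioo 0 T ×ˢ Set.univ) :
    (∫ t in Set.Ioo (0 : ℝ) T,
        ∑' x : X, deriv (fun s => φ (s, (x : EuclideanSpace ℝ (Fin n)))) t * m t x)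
      + (∫ t in Set.Ioo (0 : ℝ) T, (1 / 2 : ℝ) * ∑' e : E,
          J t e.1.1 e.1.2 * ‖e.1.2 - e.1.1‖⁻¹ *
            ∫ p in segment ℝ e.1.1 e.1.2,
              ⟪gradient (fun q => φ (t, q)) p, e.1.2 - e.1.1⟫ ∂(μH[1])) = 0 := by
  classical
  haveI : Countable X := hX.to_subtype
  haveI : Countable E := (Set.Countable.mono hEX (hX.prod hX)).to_subtype
  -- bounds on φ and its derivative
  obtain ⟨C0, hC0⟩ := hφc.exists_bound_of_continuous hφ.continuous
  have hC0' : ∀ p, |φ p| ≤ C0 := fun p => by simpa using hC0 p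
  obtain ⟨C1, hC1⟩ := (hφc.fderiv ℝ).exists_bound_of_continuous
    (hφ.continuous_fderiv (by simp))
  have hC0nn : 0 ≤ C0 := le_trans (abs_nonneg _) (hC0' (0, 0))
  have hC1nn : 0 ≤ C1 := le_trans (norm_nonneg _) (hC1 (0, 0))
  -- the per-point test functions
  set ψ : EuclideanSpace ℝ (Fin n) → ℝ → ℝ := fun x t => φ (t, x) with hψdef
  have hψcd : ∀ x, ContDiff ℝ (⊤ : ℕ∞) (ψ x) := fun x =>
    hφ.comp (contDiff_id.prodMk contDiff_const)
  have hψsupp : ∀ x, ∀ t, t ∉ Set.Ioo 0 T → ψ x t = 0 := by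
    intro x t ht
    by_contra h
    exact ht (Set.mem_prod.1 (hφsupp (subset_tsupport φ h))).1
  have hψc : ∀ x, Continuous (ψ x) := fun x => (hψcd x).continuous
  -- derivative bound
  have hψderiv : ∀ x t, deriv (ψ x) t = fderiv ℝ φ (t, x) (1, 0) := by
    intro x t
    have h1 : HasDerivAt (fun s : ℝ => ((s, x) : ℝ × EuclideanSpace ℝ (Fin n))) (1, 0) t :=
      (hasDerivAt_id t).prodMk (hasDerivAt_const t x)
    exact ((hφ.differentiable (by simp) (t, x)).hasFDerivAt.comp_hasDerivAt t h1).deriv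
  have hψdbound : ∀ x t, |deriv (ψ x) t| ≤ C1 := by
    intro x t
    rw [hψderiv]
    have h1 := (fderiv ℝ φ (t, x)).le_opNorm ((1 : ℝ), (0 : EuclideanSpace ℝ (Fin n)))
    have hn : ‖((1 : ℝ), (0 : EuclideanSpace ℝ (Fin n)))‖ = 1 := by
      rw [Prod.norm_def]; simp
    rw [hn, mul_one] at h1
    rw [← Real.norm_eq_abs]
    exact h1.trans (hC1 _)
  -- measurability of m and μ in time
  have hm_meas : ∀ x ∈ X, AEStronglyMeasurable (fun t => m t x)
      (volume.restrict (Set.Ioo 0 T)) := by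
    intro x hx
    have hFc : ContinuousOn (fun t => m 0 x + ∫ s in (0:ℝ)..t, μ s x) (Set.Icc 0 T) := by
      apply ContinuousOn.add continuousOn_const
      have := intervalIntegral.continuousOn_primitive_interval' (hμint x hx)
        (by rw [Set.uIcc_of_le hT.le]; exact Set.mem_Icc.2 ⟨le_rfl, hT.le⟩)
      rwa [Set.uIcc_of_le hT.le] at this
    have h1 : AEStronglyMeasurable (fun t => m 0 x + ∫ s in (0:ℝ)..t, μ s x)
        (volume.restrict (Set.Ioo 0 T)) :=
      ((hFc.aemeasurable measurableSet_Icc).mono_measure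
        (Measure.restrict_mono Set.Ioo_subset_Icc_self le_rfl)).aestronglyMeasurable
    apply h1.congr
    filter_upwards [ae_restrict_mem measurableSet_Ioo] with t ht
    exact (hmμ x hx t (Set.Ioo_subset_Icc_self ht)).symm
  have hμ_meas : ∀ x ∈ X, AEStronglyMeasurable (fun t => μ t x)
      (volume.restrict (Set.Ioo 0 T)) := fun x hx =>
    ((hμint x hx).1.aestronglyMeasurable).mono_measure
      (Measure.restrict_mono Set.Ioo_subset_Ioc_self le_rfl)
  -- Part 1: the first integral
  have hsum_m : ∀ t ∈ Set.Icc (0:ℝ) T, Summable (fun x : X => m t x) :=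
    fun t ht => (hm1 t ht).summable
  have part1 : (∫ t in Set.Ioo (0 : ℝ) T,
        ∑' x : X, deriv (fun s => φ (s, (x : EuclideanSpace ℝ (Fin n)))) t * m t x)
      = ∑' x : X, -∫ t in Set.Ioo (0:ℝ) T,
          φ (t, (x : EuclideanSpace ℝ (Fin n))) * μ t x := by
    have hmeas : ∀ x : X, AEStronglyMeasurable
        (fun t => deriv (ψ (x : EuclideanSpace ℝ (Fin n))) t * m t x)
        (volume.restrict (Set.Ioo 0 T)) := fun x =>
      (((hψcd x).continuous_deriv (by simp)).aestronglyMeasurable).mul (hm_meas x x.2)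
    have hfin : ∑' x : X, (∫⁻ t in Set.Ioo (0:ℝ) T,
        ‖deriv (ψ (x : EuclideanSpace ℝ (Fin n))) t * m t x‖₊) ≠ ⊤ := by
      have key : ∀ x : X, (∫⁻ t in Set.Ioo (0:ℝ) T,
          ‖deriv (ψ (x : EuclideanSpace ℝ (Fin n))) t * m t x‖₊)
          ≤ ∫⁻ t in Set.Ioo (0:ℝ) T, ENNReal.ofReal (C1 * m t x) := by
        intro x
        apply lintegral_mono_ae
        filter_upwards [ae_restrict_mem measurableSet_Ioo] with t ht
        rw [show ∀ r : ℝ, (‖r‖₊ : ℝ≥0∞) = ENNReal.ofReal |r| from fun r => Real.enorm_eq_ofReal_abs r]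
        apply ENNReal.ofReal_le_ofReal
        rw [abs_mul]
        have hm' := hm0 t (Set.Ioo_subset_Icc_self ht) x
        rw [abs_of_nonneg hm']
        exact mul_le_mul_of_nonneg_right (hψdbound x t) hm'
      refine ne_of_lt (lt_of_le_of_lt (ENNReal.tsum_le_tsum key) ?_)
      have hswap : ∑' x : X, ∫⁻ t in Set.Ioo (0:ℝ) T, ENNReal.ofReal (C1 * m t x)
          = ∫⁻ t in Set.Ioo (0:ℝ) T, ∑' x : X, ENNReal.ofReal (C1 * m t x) := by
        refine (lintegral_tsum fun x => ?_).symm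
        exact ENNReal.measurable_ofReal.comp_aemeasurable
          (((hm_meas x x.2).aemeasurable).const_mul C1)
      rw [hswap]
      have heq : ∀ t ∈ Set.Ioo (0:ℝ) T,
          (∑' x : X, ENNReal.ofReal (C1 * m t x)) = ENNReal.ofReal C1 := by
        intro t ht
        have htI := Set.Ioo_subset_Icc_self ht
        calc ∑' x : X, ENNReal.ofReal (C1 * m t x)
            = ∑' x : X, ENNReal.ofReal C1 * ENNReal.ofReal (m t x) := by
              refine tsum_congr fun x => ?_
              rw [ENNReal.ofReal_mul hC1nn]
          _ = ENNReal.ofReal C1 * ∑' x : X, ENNReal.ofReal (m t x) := ENNReal.tsum_mul_left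
          _ = ENNReal.ofReal C1 * ENNReal.ofReal 1 := by
              rw [← ENNReal.ofReal_tsum_of_nonneg
                  (f := fun x : X => m t (x : EuclideanSpace ℝ (Fin n)))
                  (fun x => hm0 t htI x) (hsum_m t htI), (hm1 t htI).tsum_eq]
          _ = ENNReal.ofReal C1 := by rw [ENNReal.ofReal_one, mul_one]
      rw [setLIntegral_congr_fun measurableSet_Ioo heq,
        setLIntegral_const]
      exact ENNReal.mul_lt_top ENNReal.ofReal_lt_top
        (by rw [Real.volume_Ioo]; exact ENNReal.ofReal_lt_top)
    have h1 := integral_tsum hmeas hfin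
    refine Eq.trans h1 ?_
    refine tsum_congr fun x => ?_
    have hre : ∫ t in Set.Ioo (0:ℝ) T, deriv (ψ (x : EuclideanSpace ℝ (Fin n))) t * m t x
        = ∫ t in Set.Ioo (0:ℝ) T, deriv (ψ (x : EuclideanSpace ℝ (Fin n))) t
            * (m 0 (x : EuclideanSpace ℝ (Fin n)) + ∫ s in (0:ℝ)..t, μ s x) := by
      refine setIntegral_congr_fun measurableSet_Ioo fun t ht => ?_
      rw [hmμ x x.2 t (Set.Ioo_subset_Icc_self ht)]
    rw [hre, time_ibp T hT (ψ (x : EuclideanSpace ℝ (Fin n))) (hψcd x) (hψsupp x)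
      (fun s => μ s x) (hμint x x.2) (m 0 x)]
  -- Part 2: the second integral
  -- the sigma-type equivalence for regrouping sums over edges
  let eqv : (Σ x : X, ↥{y | ((x : EuclideanSpace ℝ (Fin n)), y) ∈ E}) ≃ E :=
    { toFun := fun p => ⟨((p.1 : EuclideanSpace ℝ (Fin n)), (p.2 : EuclideanSpace ℝ (Fin n))),
        p.2.2⟩
      invFun := fun e => ⟨⟨e.1.1, (hEX e.2).1⟩, ⟨e.1.2, e.2⟩⟩
      left_inv := fun p => by rcases p with ⟨⟨x, hx⟩, ⟨y, hy⟩⟩; rfl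
      right_inv := fun e => by rcases e with ⟨⟨a, b⟩, h⟩; rfl }
  -- the edge-swap involution
  let σE : E ≃ E :=
    { toFun := fun e => ⟨(e.1.2, e.1.1), hEsymm _ _ e.2⟩
      invFun := fun e => ⟨(e.1.2, e.1.1), hEsymm _ _ e.2⟩
      left_inv := fun e => by rcases e with ⟨⟨a, b⟩, h⟩; rfl
      right_inv := fun e => by rcases e with ⟨⟨a, b⟩, h⟩; rfl }
  -- segment integral computation
  have hseg : ∀ (t : ℝ) (e : E), J t e.1.1 e.1.2 * ‖e.1.2 - e.1.1‖⁻¹ *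
      (∫ p in segment ℝ e.1.1 e.1.2,
        ⟪gradient (fun q => φ (t, q)) p, e.1.2 - e.1.1⟫ ∂(μH[1]))
      = J t e.1.1 e.1.2 * (φ (t, e.1.2) - φ (t, e.1.1)) := by
    intro t e
    rw [seg_integral e.1.1 e.1.2 (fun q => φ (t, q))
      (hφ.comp (contDiff_const.prodMk contDiff_id))]
    have hne : ‖(e.1.2 : EuclideanSpace ℝ (Fin n)) - e.1.1‖ ≠ 0 :=
      norm_ne_zero_iff.2 (sub_ne_zero.2 (Ne.symm (hEne _ _ e.2)))
    field_simp
  -- a.e. summability of the weights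
  set gJ : ℝ → E → ℝ := fun t e => |J t e.1.1 e.1.2| * (1 + ‖e.1.2 - e.1.1‖) with hgJdef
  have hgJnn : ∀ t e, 0 ≤ gJ t e := fun t e =>
    mul_nonneg (abs_nonneg _) (by positivity)
  have hae_sum : ∀ᵐ t ∂(volume.restrict (Set.Ioo (0:ℝ) T)), Summable (gJ t) := by
    have hmeas0 : Measurable fun t => ∑' e : E, ENNReal.ofReal (gJ t e) :=
      Measurable.ennreal_tsum fun e => ((hJmeas _ _).abs.mul_const _).ennreal_ofReal
    have h1 : ∀ᵐ t ∂(volume.restrict (Set.Ioc (0:ℝ) T)),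
        (∑' e : E, ENNReal.ofReal (gJ t e)) < ⊤ :=
      ae_lt_top' hmeas0.aemeasurable hJint.ne
    have h2 := ae_restrict_of_ae_restrict_of_subset Set.Ioo_subset_Ioc_self h1
    filter_upwards [h2] with t ht
    refine (ENNReal.summable_toReal ht.ne).congr fun e => ?_
    rw [ENNReal.toReal_ofReal (hgJnn t e)]
  have habs_of : ∀ t : ℝ, Summable (gJ t) →
      Summable (fun e : E => |J t e.1.1 e.1.2|) := by
    intro t hsum
    refine Summable.of_nonneg_of_le (fun e => abs_nonneg _) (fun e => ?_) hsum
    exact le_mul_of_one_le_right (abs_nonneg _)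
      (by linarith [norm_nonneg ((e.1.2 : EuclideanSpace ℝ (Fin n)) - e.1.1)])
  have hCEall : ∀ᵐ t ∂(volume.restrict (Set.Ioo (0:ℝ) T)),
      ∀ x (hx : x ∈ X),
        μ t x + ∑' y : ↥{y | (x, y) ∈ E}, J t x (y : EuclideanSpace ℝ (Fin n)) = 0 :=
    (MeasureTheory.ae_ball_iff hX).2 hCE
  -- the pointwise identity for good t
  have hpt : ∀ t : ℝ, Summable (gJ t) →
      (∀ x (hx : x ∈ X),
        μ t x + ∑' y : ↥{y | (x, y) ∈ E}, J t x (y : EuclideanSpace ℝ (Fin n)) = 0) →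
      ((1/2 : ℝ) * ∑' e : E, J t e.1.1 e.1.2 * (φ (t, e.1.2) - φ (t, e.1.1)))
        = ∑' x : X, φ (t, (x : EuclideanSpace ℝ (Fin n))) * μ t x := by
    intro t hsum hce
    have hJabs := habs_of t hsum
    have hs1 : Summable (fun e : E => J t e.1.1 e.1.2 * φ (t, e.1.2)) := by
      refine Summable.of_norm_bounded (hJabs.mul_right C0) fun e => ?_
      rw [Real.norm_eq_abs, abs_mul]
      exact mul_le_mul_of_nonneg_left (hC0' _) (abs_nonneg _)
    have hs2 : Summable (fun e : E => J t e.1.1 e.1.2 * φ (t, e.1.1)) := by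
      refine Summable.of_norm_bounded (hJabs.mul_right C0) fun e => ?_
      rw [Real.norm_eq_abs, abs_mul]
      exact mul_le_mul_of_nonneg_left (hC0' _) (abs_nonneg _)
    have hswapEq : ∑' e : E, J t e.1.1 e.1.2 * φ (t, e.1.1)
        = - ∑' e : E, J t e.1.1 e.1.2 * φ (t, e.1.2) := by
      have h1 := σE.tsum_eq (f := fun e : E => J t e.1.1 e.1.2 * φ (t, e.1.1))
      rw [← h1]
      have h2 : ∀ e : E, J t (σE e).1.1 (σE e).1.2 * φ (t, (σE e).1.1)
          = - (J t e.1.1 e.1.2 * φ (t, e.1.2)) := by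
        intro e
        show J t e.1.2 e.1.1 * φ (t, e.1.2) = _
        rw [hJskew t e.1.2 e.1.1]; ring
      rw [tsum_congr h2, tsum_neg]
    have hgroup : ∑' e : E, J t e.1.1 e.1.2 * φ (t, e.1.1)
        = ∑' x : X, φ (t, (x : EuclideanSpace ℝ (Fin n)))
            * (∑' y : ↥{y | ((x : EuclideanSpace ℝ (Fin n)), y) ∈ E},
                J t x (y : EuclideanSpace ℝ (Fin n))) := by
      calc ∑' e : E, J t e.1.1 e.1.2 * φ (t, e.1.1)
          = ∑' p : (Σ x : X, ↥{y | ((x : EuclideanSpace ℝ (Fin n)), y) ∈ E}),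
              J t (p.1 : EuclideanSpace ℝ (Fin n)) (p.2 : EuclideanSpace ℝ (Fin n))
                * φ (t, (p.1 : EuclideanSpace ℝ (Fin n))) :=
            (Equiv.tsum_eq eqv (fun e : E => J t e.1.1 e.1.2 * φ (t, e.1.1))).symm
        _ = ∑' x : X, ∑' y : ↥{y | ((x : EuclideanSpace ℝ (Fin n)), y) ∈ E},
              J t (x : EuclideanSpace ℝ (Fin n)) (y : EuclideanSpace ℝ (Fin n))
                * φ (t, (x : EuclideanSpace ℝ (Fin n))) :=
            Summable.tsum_sigma (eqv.summable_iff.2 hs2)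
        _ = ∑' x : X, φ (t, (x : EuclideanSpace ℝ (Fin n)))
              * (∑' y : ↥{y | ((x : EuclideanSpace ℝ (Fin n)), y) ∈ E},
                  J t x (y : EuclideanSpace ℝ (Fin n))) := by
            refine tsum_congr fun x => ?_
            rw [tsum_mul_right, mul_comm]
    calc (1/2 : ℝ) * ∑' e : E, J t e.1.1 e.1.2 * (φ (t, e.1.2) - φ (t, e.1.1))
        = (1/2 : ℝ) * ∑' e : E,
            (J t e.1.1 e.1.2 * φ (t, e.1.2) - J t e.1.1 e.1.2 * φ (t, e.1.1)) := by
          congr 1; exact tsum_congr fun e => by ring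
      _ = (1/2 : ℝ) * ((∑' e : E, J t e.1.1 e.1.2 * φ (t, e.1.2))
            - ∑' e : E, J t e.1.1 e.1.2 * φ (t, e.1.1)) := by rw [Summable.tsum_sub hs1 hs2]
      _ = - ∑' e : E, J t e.1.1 e.1.2 * φ (t, e.1.1) := by rw [hswapEq]; ring
      _ = - ∑' x : X, φ (t, (x : EuclideanSpace ℝ (Fin n)))
              * (∑' y : ↥{y | ((x : EuclideanSpace ℝ (Fin n)), y) ∈ E},
                  J t x (y : EuclideanSpace ℝ (Fin n))) := by rw [hgroup]
      _ = ∑' x : X, φ (t, (x : EuclideanSpace ℝ (Fin n))) * μ t x := by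
          rw [← tsum_neg]
          refine tsum_congr fun x => ?_
          have h3 := hce x x.2
          have hS : (∑' y : ↥{y | ((x : EuclideanSpace ℝ (Fin n)), y) ∈ E},
              J t x (y : EuclideanSpace ℝ (Fin n))) = - μ t x := by linarith
          rw [hS]; ring
  -- a.e. equality of the second integrand
  have haeEq : ∀ᵐ t ∂(volume.restrict (Set.Ioo (0:ℝ) T)),
      ((1 / 2 : ℝ) * ∑' e : E,
          J t e.1.1 e.1.2 * ‖e.1.2 - e.1.1‖⁻¹ *
            ∫ p in segment ℝ e.1.1 e.1.2,
              ⟪gradient (fun q => φ (t, q)) p, e.1.2 - e.1.1⟫ ∂(μH[1]))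
        = ∑' x : X, φ (t, (x : EuclideanSpace ℝ (Fin n))) * μ t x := by
    filter_upwards [hae_sum, hCEall] with t h1 h2
    rw [tsum_congr (hseg t)]
    exact hpt t h1 h2
  -- countability of the fibers
  have hfibC : ∀ x : X, Countable ↥{y | ((x : EuclideanSpace ℝ (Fin n)), y) ∈ E} := by
    intro x
    have hsub : {y | ((x : EuclideanSpace ℝ (Fin n)), y) ∈ E} ⊆ X := fun y hy => (hEX hy).2
    exact (Set.Countable.mono hsub hX).to_subtype
  have part2 : (∫ t in Set.Ioo (0 : ℝ) T, (1 / 2 : ℝ) * ∑' e : E,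
        J t e.1.1 e.1.2 * ‖e.1.2 - e.1.1‖⁻¹ *
          ∫ p in segment ℝ e.1.1 e.1.2,
            ⟪gradient (fun q => φ (t, q)) p, e.1.2 - e.1.1⟫ ∂(μH[1]))
      = ∑' x : X, ∫ t in Set.Ioo (0:ℝ) T,
          φ (t, (x : EuclideanSpace ℝ (Fin n))) * μ t x := by
    rw [integral_congr_ae haeEq]
    refine integral_tsum
      (fun x => ((hψc (x : EuclideanSpace ℝ (Fin n))).aestronglyMeasurable).mul
        (hμ_meas x x.2)) ?_
    have hbound : ∀ x : X, (∫⁻ t in Set.Ioo (0:ℝ) T,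
        ‖φ (t, (x : EuclideanSpace ℝ (Fin n))) * μ t x‖₊)
        ≤ ENNReal.ofReal C0 * ∫⁻ t in Set.Ioo (0:ℝ) T,
            ∑' y : ↥{y | ((x : EuclideanSpace ℝ (Fin n)), y) ∈ E},
              ENNReal.ofReal |J t x (y : EuclideanSpace ℝ (Fin n))| := by
      intro x
      rw [← lintegral_const_mul' _ _ ENNReal.ofReal_ne_top]
      apply lintegral_mono_ae
      filter_upwards [hae_sum, hCEall] with t h1 h2
      haveI := hfibC x
      have hinj : Function.Injective
          (fun y : ↥{y | ((x : EuclideanSpace ℝ (Fin n)), y) ∈ E} =>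
            (⟨((x : EuclideanSpace ℝ (Fin n)), (y : EuclideanSpace ℝ (Fin n))), y.2⟩ : E)) := by
        intro a b hab
        apply Subtype.ext
        exact congrArg
          (fun e : E => (e : EuclideanSpace ℝ (Fin n) × EuclideanSpace ℝ (Fin n)).2) hab
      have hsfib : Summable (fun y : ↥{y | ((x : EuclideanSpace ℝ (Fin n)), y) ∈ E} =>
          |J t x (y : EuclideanSpace ℝ (Fin n))|) := (habs_of t h1).comp_injective hinj
      have hμeq : μ t x = - ∑' y : ↥{y | ((x : EuclideanSpace ℝ (Fin n)), y) ∈ E},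
          J t x (y : EuclideanSpace ℝ (Fin n)) := by
        have h3 := h2 x x.2; linarith
      rw [show ∀ r : ℝ, (‖r‖₊ : ℝ≥0∞) = ENNReal.ofReal |r| from fun r => Real.enorm_eq_ofReal_abs r, abs_mul]
      calc ENNReal.ofReal (|φ (t, (x : EuclideanSpace ℝ (Fin n)))| * |μ t x|)
          ≤ ENNReal.ofReal (C0 * |μ t x|) :=
            ENNReal.ofReal_le_ofReal (mul_le_mul_of_nonneg_right (hC0' _) (abs_nonneg _))
        _ = ENNReal.ofReal C0 * ENNReal.ofReal |μ t x| := ENNReal.ofReal_mul hC0nn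
        _ ≤ ENNReal.ofReal C0 * ∑' y : ↥{y | ((x : EuclideanSpace ℝ (Fin n)), y) ∈ E},
              ENNReal.ofReal |J t x (y : EuclideanSpace ℝ (Fin n))| := by
            apply mul_le_mul_right
            rw [hμeq, abs_neg]
            have habs : |∑' y : ↥{y | ((x : EuclideanSpace ℝ (Fin n)), y) ∈ E},
                J t x (y : EuclideanSpace ℝ (Fin n))|
                ≤ ∑' y : ↥{y | ((x : EuclideanSpace ℝ (Fin n)), y) ∈ E},
                    |J t x (y : EuclideanSpace ℝ (Fin n))| := by
              have := norm_tsum_le_tsum_norm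
                (f := fun y : ↥{y | ((x : EuclideanSpace ℝ (Fin n)), y) ∈ E} =>
                  J t x (y : EuclideanSpace ℝ (Fin n)))
                (by simpa [Real.norm_eq_abs] using hsfib)
              simpa [Real.norm_eq_abs] using this
            calc ENNReal.ofReal |∑' y : ↥{y | ((x : EuclideanSpace ℝ (Fin n)), y) ∈ E},
                  J t x (y : EuclideanSpace ℝ (Fin n))|
                ≤ ENNReal.ofReal (∑' y : ↥{y | ((x : EuclideanSpace ℝ (Fin n)), y) ∈ E},
                    |J t x (y : EuclideanSpace ℝ (Fin n))|) := ENNReal.ofReal_le_ofReal habs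
              _ = ∑' y : ↥{y | ((x : EuclideanSpace ℝ (Fin n)), y) ∈ E},
                    ENNReal.ofReal |J t x (y : EuclideanSpace ℝ (Fin n))| :=
                  ENNReal.ofReal_tsum_of_nonneg (fun y => abs_nonneg _) hsfib
    have hsum_le : ∑' x : X, (∫⁻ t in Set.Ioo (0:ℝ) T,
        ‖φ (t, (x : EuclideanSpace ℝ (Fin n))) * μ t x‖₊)
        ≤ ENNReal.ofReal C0 * ∫⁻ t in Set.Ioc (0:ℝ) T,
            ∑' e : E, ENNReal.ofReal (gJ t e) := by
      calc ∑' x : X, (∫⁻ t in Set.Ioo (0:ℝ) T,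
            ‖φ (t, (x : EuclideanSpace ℝ (Fin n))) * μ t x‖₊)
          ≤ ∑' x : X, ENNReal.ofReal C0 * ∫⁻ t in Set.Ioo (0:ℝ) T,
              ∑' y : ↥{y | ((x : EuclideanSpace ℝ (Fin n)), y) ∈ E},
                ENNReal.ofReal |J t x (y : EuclideanSpace ℝ (Fin n))| :=
            ENNReal.tsum_le_tsum hbound
        _ = ENNReal.ofReal C0 * ∑' x : X, ∫⁻ t in Set.Ioo (0:ℝ) T,
              ∑' y : ↥{y | ((x : EuclideanSpace ℝ (Fin n)), y) ∈ E},
                ENNReal.ofReal |J t x (y : EuclideanSpace ℝ (Fin n))| := ENNReal.tsum_mul_left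
        _ = ENNReal.ofReal C0 * ∫⁻ t in Set.Ioo (0:ℝ) T, ∑' x : X,
              ∑' y : ↥{y | ((x : EuclideanSpace ℝ (Fin n)), y) ∈ E},
                ENNReal.ofReal |J t x (y : EuclideanSpace ℝ (Fin n))| := by
            congr 1
            refine (lintegral_tsum fun x => ?_).symm
            haveI := hfibC x
            exact (Measurable.ennreal_tsum fun y => (hJmeas _ _).abs.ennreal_ofReal).aemeasurable
        _ ≤ ENNReal.ofReal C0 * ∫⁻ t in Set.Ioo (0:ℝ) T,
              ∑' e : E, ENNReal.ofReal (gJ t e) := by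
            apply mul_le_mul_right
            apply lintegral_mono
            intro t
            have hsigma : (∑' x : X,
                ∑' y : ↥{y | ((x : EuclideanSpace ℝ (Fin n)), y) ∈ E},
                  ENNReal.ofReal |J t x (y : EuclideanSpace ℝ (Fin n))|)
                = ∑' e : E, ENNReal.ofReal |J t e.1.1 e.1.2| := by
              refine Eq.trans (ENNReal.tsum_sigma'
                (fun p : (Σ x : X, ↥{y | ((x : EuclideanSpace ℝ (Fin n)), y) ∈ E}) =>
                  ENNReal.ofReal |J t (p.1 : EuclideanSpace ℝ (Fin n))
                    (p.2 : EuclideanSpace ℝ (Fin n))|)).symm ?_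
              exact Equiv.tsum_eq eqv (fun e : E => ENNReal.ofReal |J t e.1.1 e.1.2|)
            refine le_trans (le_of_eq hsigma)
              (ENNReal.tsum_le_tsum fun e => ENNReal.ofReal_le_ofReal ?_)
            exact le_mul_of_one_le_right (abs_nonneg _)
              (by linarith [norm_nonneg ((e.1.2 : EuclideanSpace ℝ (Fin n)) - e.1.1)])
        _ ≤ ENNReal.ofReal C0 * ∫⁻ t in Set.Ioc (0:ℝ) T,
              ∑' e : E, ENNReal.ofReal (gJ t e) :=
            mul_le_mul_right
              (lintegral_mono' (Measure.restrict_mono Set.Ioo_subset_Ioc_self le_rfl) le_rfl) _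
    exact ne_of_lt (lt_of_le_of_lt hsum_le (ENNReal.mul_lt_top ENNReal.ofReal_lt_top hJint))
  rw [part1, part2, tsum_neg]
  exact neg_add_cancel _
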